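/- Let ψ ∈ Ω∞ and let κ ∈ 𝒦 satisfy lim_{n→∞} ψ(κ(n))/ψ(κ(n+1)) = 1. Then for every x ∈ M(ψ), limsup_{t→∞} φ(x)(t) = sup{ f_{L,κ}(x) : L ∈ BL(ℝ₊) }. (The left-hand side equals the Riesz semi-norm ρ₁(x), the distance in M(ψ) from x to the closure M₁(ψ) of M(ψ) ∩ L¹([0,∞)).) -/

import Mathlib

/-!
A Banach limit only sees `φ_κ(x)` near infinity, so `L(φ_κ(x)) ≤ limsup φ(x)`. Conversely,
`ψ(c) φ(x)(c) = ∫₀ᶜ x*` increases with `c`, so `φ(x)(κ w) ≥ φ(x)(v) ψ(v) / ψ(κ w)` for `v ≤ κ w`.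
Since `ψ(κ n) / ψ(κ (n + K)) → 1` for each fixed `K`, whenever `φ(x)` comes close to its `limsup`
at a late point `v`, `φ_κ(x)` stays close to it on a window of any prescribed length past `κ⁻¹ v`.
Means over such windows of lengths tending to infinity, taken to the limit along an ultrafilter,
form a Banach limit that attains the `limsup`.
-/

open MeasureTheory Filter Set

noncomputable section

/-- `f` is bounded and continuous on `[0,∞)`, i.e. (the restriction of) `f`
belongs to `C_b([0,∞))`. -/
def IsCb (f : ℝ → ℝ) : Prop :=
  ContinuousOn f (Ici 0) ∧ ∃ M : ℝ, ∀ t ∈ Ici (0:ℝ), |f t| ≤ M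

/-- Bounded real sequences, i.e. elements of `ℓ∞(ℕ)`. -/
def IsBddSeq (a : ℕ → ℝ) : Prop := ∃ M : ℝ, ∀ n, |a n| ≤ M

/-- A Banach limit on `C_b([0,∞))`: a positive linear translation-invariant
functional with `L(1) = 1`.  (The underlying map is defined on all of `ℝ → ℝ`;
the axioms only refer to its values on bounded continuous functions on `[0,∞)`.) -/
structure BanachLimitR where
  toFun : (ℝ → ℝ) → ℝ
  map_add : ∀ f g : ℝ → ℝ, IsCb f → IsCb g →
    toFun (fun t => f t + g t) = toFun f + toFun g
  map_smul : ∀ (c : ℝ) (f : ℝ → ℝ), IsCb f → toFun (fun t => c * f t) = c * toFun f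
  pos : ∀ f : ℝ → ℝ, IsCb f → (∀ t ∈ Ici (0:ℝ), 0 ≤ f t) → 0 ≤ toFun f
  map_one : toFun (fun _ => 1) = 1
  shift_inv : ∀ f : ℝ → ℝ, IsCb f → ∀ s : ℝ, 0 ≤ s → toFun (fun t => f (t + s)) = toFun f

/-- A Banach limit on `ℓ∞(ℕ)`: a positive linear shift-invariant functional
with `L'(1) = 1`. -/
structure BanachLimitN where
  toFun : (ℕ → ℝ) → ℝ
  map_add : ∀ a b : ℕ → ℝ, IsBddSeq a → IsBddSeq b →
    toFun (fun n => a n + b n) = toFun a + toFun b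
  map_smul : ∀ (c : ℝ) (a : ℕ → ℝ), IsBddSeq a → toFun (fun n => c * a n) = c * toFun a
  pos : ∀ a : ℕ → ℝ, IsBddSeq a → (∀ n, 0 ≤ a n) → 0 ≤ toFun a
  map_one : toFun (fun _ => 1) = 1
  shift_inv : ∀ a : ℕ → ℝ, IsBddSeq a → toFun (fun n => a (n + 1)) = toFun a

/-- An element of `SC_b^*([0,∞))`: a positive linear functional on `C_b([0,∞))`
with `γ(1) = 1` vanishing on `C₀([0,∞))`. -/
structure SCbStar where
  toFun : (ℝ → ℝ) → ℝ
  map_add : ∀ f g : ℝ → ℝ, IsCb f → IsCb g →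
    toFun (fun t => f t + g t) = toFun f + toFun g
  map_smul : ∀ (c : ℝ) (f : ℝ → ℝ), IsCb f → toFun (fun t => c * f t) = c * toFun f
  pos : ∀ f : ℝ → ℝ, IsCb f → (∀ t ∈ Ici (0:ℝ), 0 ≤ f t) → 0 ≤ toFun f
  map_one : toFun (fun _ => 1) = 1
  vanish : ∀ f : ℝ → ℝ, IsCb f → Tendsto f atTop (nhds 0) → toFun f = 0

/-- A positive linear functional on `C_b([0,∞))`. -/
structure PosLinFunc where
  toFun : (ℝ → ℝ) → ℝ
  map_add : ∀ f g : ℝ → ℝ, IsCb f → IsCb g →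
    toFun (fun t => f t + g t) = toFun f + toFun g
  map_smul : ∀ (c : ℝ) (f : ℝ → ℝ), IsCb f → toFun (fun t => c * f t) = c * toFun f
  pos : ∀ f : ℝ → ℝ, IsCb f → (∀ t ∈ Ici (0:ℝ), 0 ≤ f t) → 0 ≤ toFun f

/-- `ψ ∈ Ω_∞`: concave on `[0,∞)`, nonnegative, `ψ(t) → 0` as `t → 0⁺` and
`ψ(t) → ∞` as `t → ∞`. -/
def OmegaInf (ψ : ℝ → ℝ) : Prop :=
  ConcaveOn ℝ (Ici 0) ψ ∧ (∀ t ∈ Ici (0:ℝ), 0 ≤ ψ t) ∧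
    Tendsto ψ (nhdsWithin 0 (Ioi 0)) (nhds 0) ∧ Tendsto ψ atTop atTop

/-- The decreasing rearrangement `x*` of a measurable function `x` on `[0,∞)`. -/
def decRearr (x : ℝ → ℝ) (t : ℝ) : ℝ :=
  sInf {s : ℝ | 0 ≤ s ∧ volume {u : ℝ | 0 ≤ u ∧ s < |x u|} ≤ ENNReal.ofReal t}

/-- The weighted mean function `φ(x)(t) = (1/ψ(t)) ∫₀ᵗ x*(s) ds`. -/
def phiW (ψ x : ℝ → ℝ) (t : ℝ) : ℝ := (∫ s in (0:ℝ)..t, decRearr x s) / ψ t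

/-- Membership in the Marcinkiewicz space `M(ψ)`. -/
def MemM (ψ x : ℝ → ℝ) : Prop :=
  Measurable x ∧ ∃ M : ℝ, ∀ t > (0:ℝ), phiW ψ x t ≤ M

/-- Membership in the positive cone `M₊(ψ)`. -/
def MemMplus (ψ x : ℝ → ℝ) : Prop := MemM ψ x ∧ ∀ t ∈ Ici (0:ℝ), 0 ≤ x t

/-- The Marcinkiewicz norm `‖x‖_{M(ψ)} = sup_{t>0} φ(x)(t)`. -/
def MNorm (ψ x : ℝ → ℝ) : ℝ := ⨆ t > (0:ℝ), phiW ψ x t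

/-- `κ ∈ 𝒦`: strictly increasing, invertible (as a map of `[0,∞)` onto itself),
differentiable, unbounded, with `κ(0) = 0`. -/
def MemK (κ : ℝ → ℝ) : Prop :=
  StrictMonoOn κ (Ici 0) ∧ κ 0 = 0 ∧ MapsTo κ (Ici 0) (Ici 0) ∧
    SurjOn κ (Ici 0) (Ici 0) ∧ DifferentiableOn ℝ κ (Ici 0) ∧ Tendsto κ atTop atTop

/-- `f_{L,κ}(x) = L(φ_κ(x))` for a Banach limit `L` on `C_b([0,∞))`; the function
`φ_κ(x)`, bounded and continuous on `(0,∞)`, is fed to `L` as `t ↦ φ_κ(x)(max t 1)`. -/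
def fL (L : BanachLimitR) (ψ κ x : ℝ → ℝ) : ℝ :=
  L.toFun fun t => phiW ψ x (κ (max t 1))

/-- `f_{L',κ}(x) = L'({φ(x)(κ(n))}ₙ)` for a Banach limit `L'` on `ℓ∞(ℕ)`. -/
def fLN (L' : BanachLimitN) (ψ κ x : ℝ → ℝ) : ℝ :=
  L'.toFun fun n => phiW ψ x (κ n)

/-- `κ` has restricted growth with respect to `ψ` (`κ ∈ R(ψ)`): the sequence
`ψ(κ(n))/ψ(κ(n+1))` is almost convergent to `1`. -/
def RestrictedGrowth (ψ κ : ℝ → ℝ) : Prop :=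
  ∀ L' : BanachLimitN, L'.toFun (fun n => ψ (κ n) / ψ (κ ((n:ℝ) + 1))) = 1

/-- `κ` has dominated growth with respect to `ψ` (`κ ∈ D(ψ)`):
`(ψ∘κ)'(t)/(ψ∘κ)(t) < C/t` for some `C > 0` and all `t > 0`. -/
def DominatedGrowth (ψ κ : ℝ → ℝ) : Prop :=
  (∀ t > (0:ℝ), DifferentiableAt ℝ (fun u => ψ (κ u)) t) ∧
    ∃ C > (0:ℝ), ∀ t > (0:ℝ), deriv (fun u => ψ (κ u)) t / ψ (κ t) < C / t

/-- `κ` is of exponential increase: `κ(t + C) > 2κ(t)` for some `C > 0` and all `t > 0`. -/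
def ExpIncrease (κ : ℝ → ℝ) : Prop := ∃ C > (0:ℝ), ∀ t > (0:ℝ), 2 * κ t < κ (t + C)

/-- The piecewise linear extension map `p : ℓ∞(ℕ) → C_b([0,∞))`. -/
def plExt (a : ℕ → ℝ) (t : ℝ) : ℝ :=
  a ⌊t⌋₊ + (a (⌊t⌋₊ + 1) - a ⌊t⌋₊) * (t - (⌊t⌋₊ : ℝ))

/-- The Cesàro mean `C(g)(μ) = (1/μ) ∫₀^μ g(s) ds` (with `C(g)(0) := g(0)`). -/
def cesaro (g : ℝ → ℝ) (μ : ℝ) : ℝ :=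
  if μ = 0 then g 0 else (∫ s in (0:ℝ)..μ, g s) / μ

/-- `M_k(g)(λ) = (1/k(λ)) ∫₀^λ g(s) k'(s) ds` (with `M_k(g)(0) := g(0)`). -/
def MkFun (k g : ℝ → ℝ) (l : ℝ) : ℝ :=
  if l = 0 then g 0 else (∫ s in (0:ℝ)..l, g s * deriv k s) / k l

/-- The Connes-Dixmier functional `τ_{γ,k}(x) = γ(M_k(φ(x)))`; the function
`M_k(φ(x))`, bounded and continuous on `(0,∞)`, is fed to `γ` as `t ↦ M_k(φ(x))(max t 1)`. -/
def tauCD (γ : SCbStar) (ψ k x : ℝ → ℝ) : ℝ :=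
  γ.toFun fun t => MkFun k (phiW ψ x) (max t 1)

/-- A set `Λ` of Banach limits has the Cesàro limit property if for each
`g ∈ C_b([0,∞))` both `liminf C(g)` and `limsup C(g)` are attained as values `L(g)`, `L ∈ Λ`. -/
def CesaroLimitProp (Λ : Set BanachLimitR) : Prop :=
  ∀ g : ℝ → ℝ, IsCb g →
    (∃ L ∈ Λ, L.toFun g = liminf (cesaro g) atTop) ∧
    (∃ L ∈ Λ, L.toFun g = limsup (cesaro g) atTop)

/-- Dilation invariance of an element of `SC_b^*([0,∞))`. -/
def DilationInvariant (ω : SCbStar) : Prop :=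
  ∀ g : ℝ → ℝ, IsCb g → ∀ a : ℝ, 0 < a → ω.toFun (fun t => g (a * t)) = ω.toFun g

open Topology

namespace IsCb

variable {f g : ℝ → ℝ}

lemma add (hf : IsCb f) (hg : IsCb g) : IsCb fun t => f t + g t := by
  obtain ⟨hfc, M, hM⟩ := hf
  obtain ⟨hgc, N, hN⟩ := hg
  exact ⟨hfc.add hgc, M + N, fun t ht => (abs_add_le _ _).trans (add_le_add (hM t ht) (hN t ht))⟩

lemma const_mul (hf : IsCb f) (c : ℝ) : IsCb fun t => c * f t := by
  obtain ⟨hfc, M, hM⟩ := hf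
  refine ⟨continuousOn_const.mul hfc, |c| * M, fun t ht => ?_⟩
  rw [abs_mul]
  exact mul_le_mul_of_nonneg_left (hM t ht) (abs_nonneg c)

lemma sub (hf : IsCb f) (hg : IsCb g) : IsCb fun t => f t - g t := by
  simpa only [sub_eq_add_neg, neg_one_mul] using hf.add (hg.const_mul (-1))

lemma comp_add_right (hf : IsCb f) {s : ℝ} (hs : 0 ≤ s) : IsCb fun t => f (t + s) := by
  obtain ⟨hfc, M, hM⟩ := hf
  have hmaps : MapsTo (· + s) (Ici (0 : ℝ)) (Ici 0) := fun t ht => add_nonneg ht hs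
  exact ⟨hfc.comp (continuous_add_const s).continuousOn hmaps, M, fun t ht => hM _ (hmaps ht)⟩

lemma intervalIntegrable (hf : IsCb f) {a b : ℝ} (ha : 0 ≤ a) (hb : 0 ≤ b) :
    IntervalIntegrable f volume a b :=
  (hf.1.mono fun _ hu => le_trans (le_min ha hb) hu.1).intervalIntegrable

end IsCb

lemma isCb_const (c : ℝ) : IsCb fun _ => c :=
  ⟨continuousOn_const, |c|, fun _ _ => le_rfl⟩

namespace BanachLimitR

variable (L : BanachLimitR) {f g : ℝ → ℝ}

lemma toFun_const (c : ℝ) : L.toFun (fun _ => c) = c := by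
  simpa only [mul_one, L.map_one] using L.map_smul c (fun _ => 1) (isCb_const 1)

lemma toFun_mono (hf : IsCb f) (hg : IsCb g) (hfg : ∀ t ∈ Ici (0 : ℝ), f t ≤ g t) :
    L.toFun f ≤ L.toFun g := by
  have hsplit := L.map_add f _ hf (hg.sub hf)
  simp only [add_sub_cancel] at hsplit
  have hpos := L.pos _ (hg.sub hf) fun t ht => sub_nonneg.2 (hfg t ht)
  linarith

/-- Translation invariance: only the values of `f` near infinity matter. -/
lemma toFun_le_of_eventually_le (hf : IsCb f) {c : ℝ} (h : ∀ᶠ t in atTop, f t ≤ c) :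
    L.toFun f ≤ c := by
  obtain ⟨T, hT⟩ := eventually_atTop.1 (h.and (eventually_ge_atTop 0))
  rw [← L.shift_inv f hf T (hT T le_rfl).2, ← L.toFun_const c]
  exact L.toFun_mono (hf.comp_add_right (hT T le_rfl).2) (isCb_const c)
    fun t ht => (hT _ (le_add_of_nonneg_left ht)).1

end BanachLimitR

def windowMean (f : ℝ → ℝ) (t S : ℝ) : ℝ := (∫ u in t..t + S, f u) / S

section WindowMean

variable {f g : ℝ → ℝ} {t S M : ℝ}

lemma windowMean_add (hf : IsCb f) (hg : IsCb g) (ht : 0 ≤ t) (hS : 0 ≤ S) :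
    windowMean (fun u => f u + g u) t S = windowMean f t S + windowMean g t S := by
  rw [windowMean, intervalIntegral.integral_add (hf.intervalIntegrable ht (by linarith))
    (hg.intervalIntegrable ht (by linarith)), add_div, windowMean, windowMean]

lemma windowMean_const_mul (c : ℝ) (f : ℝ → ℝ) (t S : ℝ) :
    windowMean (fun u => c * f u) t S = c * windowMean f t S := by
  rw [windowMean, windowMean, intervalIntegral.integral_const_mul, mul_div_assoc]

lemma windowMean_const (c t : ℝ) (hS : S ≠ 0) : windowMean (fun _ => c) t S = c := by
  rw [windowMean, intervalIntegral.integral_const, add_sub_cancel_left, smul_eq_mul,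
    mul_div_cancel_left₀ c hS]

lemma windowMean_comp_add_right (f : ℝ → ℝ) (t S s : ℝ) :
    windowMean (fun u => f (u + s)) t S = windowMean f (t + s) S := by
  rw [windowMean, windowMean, intervalIntegral.integral_comp_add_right, add_right_comm]

lemma le_windowMean (hf : IsCb f) (ht : 0 ≤ t) (hS : 0 < S) {c : ℝ}
    (hc : ∀ u ∈ Icc t (t + S), c ≤ f u) : c ≤ windowMean f t S := by
  rw [windowMean, le_div_iff₀ hS]
  calc c * S = ∫ _ in t..t + S, c := by simp [mul_comm]
    _ ≤ ∫ u in t..t + S, f u :=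
      intervalIntegral.integral_mono_on (by linarith) intervalIntegrable_const
        (hf.intervalIntegrable ht (by linarith)) hc

lemma abs_integral_le_of_abs_le (hM : ∀ u ∈ Ici (0 : ℝ), |f u| ≤ M) {a b : ℝ} (ha : 0 ≤ a)
    (hb : 0 ≤ b) : |∫ u in a..b, f u| ≤ M * |b - a| :=
  intervalIntegral.norm_integral_le_of_norm_le_const (f := f) fun u hu =>
    hM u (le_trans (le_min ha hb) (uIoc_subset_uIcc hu).1)

lemma abs_windowMean_le (hM : ∀ u ∈ Ici (0 : ℝ), |f u| ≤ M) (ht : 0 ≤ t) (hS : 0 < S) :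
    |windowMean f t S| ≤ M := by
  rw [windowMean, abs_div, abs_of_pos hS, div_le_iff₀ hS]
  simpa [abs_of_pos hS] using abs_integral_le_of_abs_le hM ht (by linarith : 0 ≤ t + S)

lemma abs_windowMean_add_sub_le (hf : IsCb f) (hM : ∀ u ∈ Ici (0 : ℝ), |f u| ≤ M)
    (ht : 0 ≤ t) {s : ℝ} (hs : 0 ≤ s) (hS : 0 < S) :
    |windowMean f (t + s) S - windowMean f t S| ≤ 2 * s * M / S := by
  rw [windowMean, windowMean, ← sub_div, abs_div, abs_of_pos hS,
    div_le_div_iff_of_pos_right hS, intervalIntegral.integral_interval_sub_interval_comm'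
      (hf.intervalIntegrable (a := t + s) (b := t + s + S) (by linarith) (by linarith))
      (hf.intervalIntegrable (b := t + S) ht (by linarith))
      (hf.intervalIntegrable (a := t + s) (b := t) (by linarith) ht)]
  calc |(∫ u in t + S..t + s + S, f u) - ∫ u in t..t + s, f u|
      ≤ |∫ u in t + S..t + s + S, f u| + |∫ u in t..t + s, f u| := abs_sub _ _
    _ ≤ M * |t + s + S - (t + S)| + M * |t + s - t| :=
      add_le_add (abs_integral_le_of_abs_le hM (by linarith) (by linarith))
        (abs_integral_le_of_abs_le hM ht (by linarith))
    _ = 2 * s * M := by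
      rw [show t + s + S - (t + S) = s by ring, add_sub_cancel_left, abs_of_nonneg hs]; ring

end WindowMean

lemma Ultrafilter.tendsto_limUnder_of_eventually_abs_le {ι : Type*} (U : Ultrafilter ι)
    {a : ι → ℝ} {M : ℝ} (ha : ∀ᶠ k in U, |a k| ≤ M) : Tendsto a U (𝓝 (limUnder U a)) := by
  obtain ⟨l, -, hl⟩ := isCompact_Icc.ultrafilter_le_nhds (U.map a)
    (le_principal_iff.2 (ha.mono fun _ hk => abs_le.1 hk))
  exact tendsto_nhds_limUnder ⟨l, hl⟩

lemma hyperfilter_le_atTop : (hyperfilter ℕ : Filter ℕ) ≤ atTop :=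
  Nat.cofinite_eq_atTop ▸ hyperfilter_le_cofinite

section WindowBanachLimit

variable {t S : ℕ → ℝ} (ht : ∀ k, 0 ≤ t k) (hS : Tendsto S atTop atTop)

include ht hS in
lemma tendsto_windowMean_hyperfilter {f : ℝ → ℝ} (hf : IsCb f) :
    Tendsto (fun k => windowMean f (t k) (S k)) (hyperfilter ℕ)
      (𝓝 (limUnder (hyperfilter ℕ) fun k => windowMean f (t k) (S k))) := by
  obtain ⟨M, hM⟩ := hf.2
  exact Ultrafilter.tendsto_limUnder_of_eventually_abs_le _ <| hyperfilter_le_atTop <|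
    (hS.eventually_gt_atTop 0).mono fun k hk => abs_windowMean_le hM (ht k) hk

/-- Shift invariance comes from `S k → ∞`: sliding a window by `s` moves its mean by
`O(s / S k)`. -/
def windowBanachLimit : BanachLimitR where
  toFun f := limUnder (hyperfilter ℕ) fun k => windowMean f (t k) (S k)
  map_add f g hf hg := by
    refine Tendsto.limUnder_eq <| ((tendsto_windowMean_hyperfilter ht hS hf).add
      (tendsto_windowMean_hyperfilter ht hS hg)).congr' (hyperfilter_le_atTop ?_)
    filter_upwards [hS.eventually_ge_atTop 0] with k hk
    exact (windowMean_add hf hg (ht k) hk).symm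
  map_smul c f hf := by
    simp only [windowMean_const_mul]
    exact ((tendsto_windowMean_hyperfilter ht hS hf).const_mul c).limUnder_eq
  pos f hf hpos := ge_of_tendsto (tendsto_windowMean_hyperfilter ht hS hf) <|
    hyperfilter_le_atTop <| (hS.eventually_gt_atTop 0).mono fun k hk =>
      le_windowMean hf (ht k) hk fun u hu => hpos u ((ht k).trans hu.1)
  map_one := by
    refine Tendsto.limUnder_eq <| tendsto_const_nhds.congr' <| hyperfilter_le_atTop ?_
    exact (hS.eventually_ne_atTop 0).mono fun k hk => (windowMean_const 1 (t k) hk).symm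
  shift_inv f hf s hs := by
    obtain ⟨M, hM⟩ := hf.2
    have hslide : Tendsto (fun k => windowMean f (t k + s) (S k) - windowMean f (t k) (S k))
        atTop (𝓝 0) := by
      refine squeeze_zero_norm' ?_ ((tendsto_const_nhds (x := 2 * s * M)).div_atTop hS)
      filter_upwards [hS.eventually_gt_atTop 0] with k hk
      exact abs_windowMean_add_sub_le hf hM (ht k) hs hk
    simp only [windowMean_comp_add_right]
    simpa using ((tendsto_windowMean_hyperfilter ht hS hf).add
      (hslide.mono_left hyperfilter_le_atTop)).limUnder_eq

lemma le_windowBanachLimit_apply {f : ℝ → ℝ} (hf : IsCb f) {c : ℝ}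
    (hc : ∀ᶠ k in atTop, ∀ u ∈ Icc (t k) (t k + S k), c ≤ f u) :
    c ≤ (windowBanachLimit ht hS).toFun f :=
  ge_of_tendsto (tendsto_windowMean_hyperfilter ht hS hf) <| hyperfilter_le_atTop <|
    (hc.and (hS.eventually_gt_atTop 0)).mono fun k hk => le_windowMean hf (ht k) hk.2 hk.1

end WindowBanachLimit

lemma BanachLimitR.exists_le_toFun {f : ℝ → ℝ} (hf : IsCb f) {c : ℝ}
    (hwin : ∀ S ε : ℝ, 0 < ε → ∃ t ≥ 0, ∀ u ∈ Icc t (t + S), c - ε ≤ f u) :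
    ∃ L : BanachLimitR, c ≤ L.toFun f := by
  choose t ht hwindow using fun k : ℕ => hwin k (1 / (k + 1)) Nat.one_div_pos_of_nat
  refine ⟨windowBanachLimit ht tendsto_natCast_atTop_atTop,
    le_of_forall_pos_le_add fun ε hε => ?_⟩
  obtain ⟨N, hN⟩ := exists_nat_one_div_lt hε
  have := le_windowBanachLimit_apply ht tendsto_natCast_atTop_atTop hf (c := c - ε) <|
    (eventually_ge_atTop N).mono fun k hk u hu => by
      have : 1 / ((k : ℝ) + 1) ≤ 1 / ((N : ℝ) + 1) := Nat.one_div_le_one_div hk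
      linarith [hwindow k u hu]
  linarith

/-- A negative secant slope would persist to the right of it and force `f` to `-∞`. -/
lemma ConcaveOn.monotoneOn_Ici_of_le {f : ℝ → ℝ} {c B : ℝ} (hf : ConcaveOn ℝ (Ici c) f)
    (hB : ∀ t ∈ Ici c, B ≤ f t) : MonotoneOn f (Ici c) := by
  intro a ha b hb hab
  rcases hab.eq_or_lt with rfl | hab
  · exact le_rfl
  by_contra! hba
  set m := (f b - f a) / (b - a) with hm
  have hm0 : m < 0 := div_neg_of_neg_of_pos (by linarith) (by linarith)
  set z := b + (f b - B + 1) / -m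
  have hzb : b < z := lt_add_of_pos_right b (div_pos (by linarith [hB b hb]) (by linarith))
  have hz : z ∈ Ici c := le_trans hb hzb.le
  have hslope := hf.slope_anti_adjacent ha hz hab hzb
  have hdrop : m * (z - b) = -(f b - B + 1) := by
    simp only [z, add_sub_cancel_left]
    field_simp [hm0.ne]
  rw [← hm, div_le_iff₀ (by linarith), hdrop] at hslope
  linarith [hB z hz]

namespace OmegaInf

variable {ψ : ℝ → ℝ} (hψ : OmegaInf ψ)
include hψ

lemma monotoneOn : MonotoneOn ψ (Ici 0) :=
  hψ.1.monotoneOn_Ici_of_le hψ.2.1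

lemma pos {t : ℝ} (ht : 0 < t) : 0 < ψ t := by
  obtain ⟨T, hT, htT⟩ := ((hψ.2.2.2.eventually_gt_atTop 0).and (eventually_gt_atTop t)).exists
  have hslope := hψ.1.slope_anti_adjacent (self_mem_Ici) (le_of_lt (ht.trans htT)) ht htT
  rw [sub_zero, div_le_div_iff₀ (by linarith) ht] at hslope
  nlinarith [hψ.2.1 0 self_mem_Ici, hψ.2.1 t ht.le]

lemma continuousOn : ContinuousOn ψ (Ioi 0) :=
  (hψ.1.subset Ioi_subset_Ici_self (convex_Ioi 0)).continuousOn isOpen_Ioi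

end OmegaInf

namespace MemK

variable {κ : ℝ → ℝ} (hκ : MemK κ)
include hκ

lemma pos {t : ℝ} (ht : 0 < t) : 0 < κ t := by
  simpa only [hκ.2.1] using hκ.1 self_mem_Ici (mem_Ici.2 ht.le) ht

lemma monotoneOn : MonotoneOn κ (Ici 0) := hκ.1.monotoneOn

lemma continuousOn : ContinuousOn κ (Ici 0) := hκ.2.2.2.2.1.continuousOn

end MemK

lemma decRearr_nonneg (x : ℝ → ℝ) (t : ℝ) : 0 ≤ decRearr x t :=
  Real.sInf_nonneg fun _ hs => hs.1

/-- The hypothesis rules out the junk value `sInf ∅ = 0`: the defining set is nonempty at `c`. -/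
lemma antitoneOn_decRearr {x : ℝ → ℝ} {c : ℝ} (hc : decRearr x c ≠ 0) :
    AntitoneOn (decRearr x) (Ici c) := by
  set D : ℝ → Set ℝ := fun t =>
    {s : ℝ | 0 ≤ s ∧ volume {u : ℝ | 0 ≤ u ∧ s < |x u|} ≤ ENNReal.ofReal t}
  have hD : ∀ t, decRearr x t = sInf (D t) := fun _ => rfl
  have hmono : Monotone D := fun a b hab s hs =>
    ⟨hs.1, hs.2.trans (ENNReal.ofReal_le_ofReal hab)⟩
  have hne : (D c).Nonempty := by
    by_contra h
    rw [hD, not_nonempty_iff_eq_empty.1 h, Real.sInf_empty] at hc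
    exact hc rfl
  intro a ha b _ hab
  exact csInf_le_csInf ⟨0, fun s hs => hs.1⟩ (hne.mono (hmono ha)) (hmono hab)

/-- Where `x*` is not integrable the interval integral takes the junk value `0`; a failure of
integrability on `[0, b]` makes the primitive vanish on all of `[0, b]`. -/
lemma integral_decRearr_eq_zero {x : ℝ → ℝ} {a b : ℝ}
    (hb : ¬ IntervalIntegrable (decRearr x) volume 0 b) (ha : 0 ≤ a) (hab : a ≤ b) :
    ∫ s in (0 : ℝ)..a, decRearr x s = 0 := by
  by_cases hIa : IntervalIntegrable (decRearr x) volume 0 a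
  · have hzero : EqOn (decRearr x) 0 (uIcc 0 a) := by
      intro c hc
      by_contra hne
      rw [uIcc_of_le ha] at hc
      have hanti : AntitoneOn (decRearr x) (uIcc a b) :=
        (antitoneOn_decRearr hne).mono fun y hy => hc.2.trans (uIcc_of_le hab ▸ hy).1
      exact hb (hIa.trans hanti.intervalIntegrable)
    simp [intervalIntegral.integral_congr hzero]
  · exact intervalIntegral.integral_undef hIa

lemma monotoneOn_integral_decRearr (x : ℝ → ℝ) :
    MonotoneOn (fun t => ∫ s in (0 : ℝ)..t, decRearr x s) (Ici 0) := by
  intro a ha b _ hab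
  by_cases hIb : IntervalIntegrable (decRearr x) volume 0 b
  · exact intervalIntegral.integral_mono_interval le_rfl ha hab
      (Eventually.of_forall (decRearr_nonneg x)) hIb
  · simp only [integral_decRearr_eq_zero hIb ha hab, intervalIntegral.integral_undef hIb, le_rfl]

lemma continuousOn_integral_decRearr (x : ℝ → ℝ) :
    ContinuousOn (fun t => ∫ s in (0 : ℝ)..t, decRearr x s) (Ici 0) := by
  by_cases H : ∀ b ≥ 0, IntervalIntegrable (decRearr x) volume 0 b
  · intro t ht
    have hnhds : Icc 0 (t + 1) ∈ 𝓝[Ici 0] t := by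
      rw [← Ici_inter_Iic]
      exact inter_mem_nhdsWithin _ (Iic_mem_nhds (lt_add_one t))
    refine (intervalIntegral.continuousWithinAt_primitive (measure_singleton t) ?_)
      |>.mono_of_mem_nhdsWithin hnhds
    have ht1 : 0 ≤ t + 1 := by linarith [mem_Ici.1 ht]
    rw [min_self, max_eq_right ht1]
    exact H (t + 1) ht1
  · push Not at H
    obtain ⟨b, hb0, hb⟩ := H
    refine (continuousOn_const (c := (0 : ℝ))).congr fun t ht => ?_
    rcases le_total t b with htb | hbt
    · exact integral_decRearr_eq_zero hb ht htb
    · exact intervalIntegral.integral_undef fun hI =>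
        hb (hI.mono_set (uIcc_subset_uIcc left_mem_uIcc (by rw [uIcc_of_le ht]; exact ⟨hb0, hbt⟩)))

section Phi

variable {ψ : ℝ → ℝ} (hψ : OmegaInf ψ) (x : ℝ → ℝ)
include hψ

lemma phiW_nonneg {t : ℝ} (ht : 0 ≤ t) : 0 ≤ phiW ψ x t :=
  div_nonneg (intervalIntegral.integral_nonneg ht fun u _ => decRearr_nonneg x u) (hψ.2.1 t ht)

lemma phiW_mul_div_le {c w : ℝ} (hc : 0 < c) (hcw : c ≤ w) :
    phiW ψ x c * (ψ c / ψ w) ≤ phiW ψ x w := by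
  rw [phiW, div_mul_div_cancel₀ (hψ.pos hc).ne']
  exact div_le_div_of_nonneg_right (monotoneOn_integral_decRearr x hc.le (hc.le.trans hcw) hcw)
    (hψ.2.1 w (hc.le.trans hcw))

lemma continuousOn_phiW : ContinuousOn (phiW ψ x) (Ioi 0) :=
  ((continuousOn_integral_decRearr x).mono Ioi_subset_Ici_self).div hψ.continuousOn
    fun _ ht => (hψ.pos ht).ne'

end Phi

lemma tendsto_div_add_of_tendsto_div_succ {a : ℕ → ℝ} (ha : ∀ᶠ n in atTop, a n ≠ 0)
    (h : Tendsto (fun n => a n / a (n + 1)) atTop (𝓝 1)) (K : ℕ) :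
    Tendsto (fun n => a n / a (n + K)) atTop (𝓝 1) := by
  induction K with
  | zero => exact tendsto_const_nhds.congr' (ha.mono fun n hn => (div_self hn).symm)
  | succ K ih =>
    have hK := ih.mul (h.comp (tendsto_add_atTop_nat K))
    rw [mul_one] at hK
    refine hK.congr' ?_
    filter_upwards [(tendsto_add_atTop_nat K).eventually ha] with n hn
    simp only [Function.comp_apply, div_mul_div_cancel₀ hn, add_assoc]

def phiKappa (ψ κ x : ℝ → ℝ) (t : ℝ) : ℝ := phiW ψ x (κ (max t 1))

section PhiKappa

variable {ψ κ x : ℝ → ℝ} (hψ : OmegaInf ψ) (hκ : MemK κ)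
include hψ hκ

lemma isCb_phiKappa (hx : MemM ψ x) : IsCb (phiKappa ψ κ x) := by
  have hκpos : ∀ t, 0 < κ (max t 1) := fun t => hκ.pos (one_pos.trans_le (le_max_right t 1))
  obtain ⟨M, hM⟩ := hx.2
  refine ⟨?_, M, fun t _ => ?_⟩
  · have hinner : ContinuousOn (fun t => κ (max t 1)) (Ici 0) :=
      hκ.continuousOn.comp (continuous_id.max continuous_const).continuousOn
        fun t _ => zero_le_one.trans (le_max_right t 1)
    exact (continuousOn_phiW hψ x).comp hinner fun t _ => hκpos t
  · rw [phiKappa, abs_of_nonneg (phiW_nonneg hψ x (hκpos t).le)]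
    exact hM _ (hκpos t)

lemma fL_le_limsup (hx : MemM ψ x) (L : BanachLimitR) :
    fL L ψ κ x ≤ limsup (phiW ψ x) atTop := by
  obtain ⟨M, hM⟩ := hx.2
  have hbdd : IsBoundedUnder (· ≤ ·) atTop (phiW ψ x) :=
    isBoundedUnder_of_eventually_le ((eventually_gt_atTop 0).mono hM)
  have hκ' : Tendsto (fun t => κ (max t 1)) atTop atTop :=
    hκ.2.2.2.2.2.comp (tendsto_atTop_mono (le_max_left · 1) tendsto_id)
  refine le_of_forall_pos_le_add fun ε hε =>
    L.toFun_le_of_eventually_le (isCb_phiKappa hψ hκ hx) ?_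
  exact hκ'.eventually ((eventually_lt_of_limsup_lt (lt_add_of_pos_right _ hε) hbdd).mono
    fun _ h => h.le)

/-- The window starts at `⌊w₀⌋ + 1`, where `κ w₀` is a late point at which `φ(x)` is close to its
`limsup`. -/
lemma exists_window_le_phiKappa
    (h1 : Tendsto (fun n : ℕ => ψ (κ n) / ψ (κ (n + 1))) atTop (𝓝 1)) (S : ℝ) {ε : ℝ}
    (hε : 0 < ε) :
    ∃ t ≥ 0, ∀ w ∈ Icc t (t + S), limsup (phiW ψ x) atTop - ε ≤ phiKappa ψ κ x w := by
  set α := limsup (phiW ψ x) atTop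
  set K := ⌈S⌉₊ + 1
  have hψ0 : ∀ t ∈ Ici (0 : ℝ), 0 ≤ ψ t := hψ.2.1
  have hκ0 : MapsTo κ (Ici 0) (Ici 0) := hκ.2.2.1
  have hψκ : ∀ {a b : ℝ}, 0 ≤ a → a ≤ b → ψ (κ a) ≤ ψ (κ b) := fun ha hab =>
    hψ.monotoneOn (hκ0 ha) (hκ0 (ha.trans hab)) (hκ.monotoneOn ha (ha.trans hab) hab)
  have hratio : Tendsto (fun n : ℕ => ψ (κ n) / ψ (κ ((n + K : ℕ) : ℝ))) atTop (𝓝 1) :=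
    tendsto_div_add_of_tendsto_div_succ (a := fun n : ℕ => ψ (κ n))
      ((eventually_gt_atTop 0).mono fun n hn => (hψ.pos (hκ.pos (by exact_mod_cast hn))).ne')
      (by simpa only [Nat.cast_add_one] using h1) K
  obtain ⟨N, hN⟩ := eventually_atTop.1 <| (hratio.const_mul (α - ε / 2)).eventually
    (eventually_gt_nhds (by linarith : α - ε < (α - ε / 2) * 1))
  have hcobdd : IsCoboundedUnder (· ≤ ·) atTop (phiW ψ x) :=
    isCoboundedUnder_le_of_eventually_le atTop
      ((eventually_ge_atTop 0).mono fun t ht => phiW_nonneg hψ x ht)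
  obtain ⟨v, hv, hvN⟩ := ((frequently_lt_of_lt_limsup hcobdd (by linarith : α - ε / 2 < α))
    |>.and_eventually (eventually_ge_atTop (κ (N + 1)))).exists
  have hN1 : (0 : ℝ) ≤ N + 1 := by positivity
  obtain ⟨w₀, hw₀, rfl⟩ := hκ.2.2.2.1 (le_trans (hκ0 hN1) hvN)
  have hNw₀ : (N : ℝ) + 1 ≤ w₀ := (hκ.1.le_iff_le hN1 hw₀).1 hvN
  set n := ⌊w₀⌋₊
  have hn : (n : ℝ) ≤ w₀ := Nat.floor_le hw₀
  have hn1 : w₀ < n + 1 := Nat.lt_floor_add_one w₀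
  have hNn : N ≤ n := Nat.le_floor (by linarith)
  refine ⟨n + 1, by positivity, fun w hw => ?_⟩
  have hw₀w : w₀ ≤ w := by linarith [hw.1]
  have hw1 : 1 ≤ w := by linarith [hw.1, Nat.cast_nonneg (α := ℝ) n]
  have hwK : w ≤ ((n + K : ℕ) : ℝ) := by
    simp only [K]
    push_cast
    linarith [Nat.le_ceil S, hw.2]
  have hκw : 0 < κ w := hκ.pos (by linarith)
  have hψratio : ψ (κ n) / ψ (κ ((n + K : ℕ) : ℝ)) ≤ ψ (κ w₀) / ψ (κ w) :=
    div_le_div₀ (hψ0 _ (hκ0 hw₀)) (hψκ n.cast_nonneg hn) (hψ.pos hκw) (hψκ (by linarith) hwK)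
  have hψratio0 : 0 ≤ ψ (κ n) / ψ (κ ((n + K : ℕ) : ℝ)) :=
    div_nonneg (hψ0 _ (hκ0 (mem_Ici.2 n.cast_nonneg)))
      (hψ0 _ (hκ0 (mem_Ici.2 (n + K).cast_nonneg)))
  rw [phiKappa, max_eq_left hw1]
  calc α - ε ≤ (α - ε / 2) * (ψ (κ n) / ψ (κ ((n + K : ℕ) : ℝ))) := (hN n hNn).le
    _ ≤ phiW ψ x (κ w₀) * (ψ (κ w₀) / ψ (κ w)) :=
      mul_le_mul hv.le hψratio hψratio0 (phiW_nonneg hψ x (hκ0 hw₀))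
    _ ≤ phiW ψ x (κ w) :=
      phiW_mul_div_le hψ x (hκ.pos (by linarith [Nat.cast_nonneg (α := ℝ) N]))
        (hκ.monotoneOn hw₀ (mem_Ici.2 (by linarith [mem_Ici.1 hw₀])) hw₀w)

lemma exists_limsup_le_fL (hx : MemM ψ x)
    (h1 : Tendsto (fun n : ℕ => ψ (κ n) / ψ (κ (n + 1))) atTop (𝓝 1)) :
    ∃ L : BanachLimitR, limsup (phiW ψ x) atTop ≤ fL L ψ κ x :=
  BanachLimitR.exists_le_toFun (isCb_phiKappa hψ hκ hx) fun S _ hε =>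
    exists_window_le_phiKappa hψ hκ h1 S hε

end PhiKappa

/-- if `ψ(κ(n))/ψ(κ(n+1)) → 1` then for every `x ∈ M(ψ)`
the Riesz semi-norm `ρ₁(x) = limsup_{t→∞} φ(x)(t)` equals
`sup { f_{L,κ}(x) : L ∈ BL(ℝ₊) }`. -/
theorem limsup_phi_eq_sup_fL (ψ κ : ℝ → ℝ) (hψ : OmegaInf ψ) (hκ : MemK κ)
    (h1 : Tendsto (fun n : ℕ => ψ (κ (n:ℝ)) / ψ (κ ((n:ℝ) + 1))) atTop (nhds 1))
    (x : ℝ → ℝ) (hx : MemM ψ x) :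
    limsup (phiW ψ x) atTop = sSup {r : ℝ | ∃ L : BanachLimitR, r = fL L ψ κ x} := by
  have hle : ∀ L : BanachLimitR, fL L ψ κ x ≤ limsup (phiW ψ x) atTop :=
    fL_le_limsup hψ hκ hx
  obtain ⟨L₀, hL₀⟩ := exists_limsup_le_fL hψ hκ hx h1
  have hgreatest : IsGreatest {r : ℝ | ∃ L : BanachLimitR, r = fL L ψ κ x}
      (limsup (phiW ψ x) atTop) := by
    refine ⟨⟨L₀, hL₀.antisymm (hle L₀)⟩, ?_⟩
    rintro r ⟨L, rfl⟩
    exact hle L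
  exact hgreatest.csSup_eq.symm
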